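/- Let X_1, X_2, X_3 be jointly distributed random variables. If Δ(S) ≥ I(X_{{1,2}}; X_3) and Δ(S) ≥ I(X_{{1,3}}; X_2), where Δ(S) = (1/2)·(H(X_1)+H(X_2)+H(X_3)−H(X_1,X_2,X_3)), then I(X_1;X_2) = I(X_1;X_3) and I(X_2;X_3|X_1) = 0. -/

import Mathlib

open Finset

/-- The probability that the random variable `X` takes the value `a`. -/
noncomputable def prb {Ω α : Type*} [Fintype Ω] [DecidableEq α]
    (p : Ω → ℝ) (X : Ω → α) (a : α) : ℝ :=
  ∑ ω ∈ Finset.univ.filter (fun ω => X ω = a), p ω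

/-- Shannon entropy of a random variable `X` on a finite probability space. -/
noncomputable def ent {Ω α : Type*} [Fintype Ω] [Fintype α] [DecidableEq α]
    (p : Ω → ℝ) (X : Ω → α) : ℝ :=
  ∑ a : α, Real.negMulLog (prb p X a)

/-- Mutual information `I(X;Y) = H(X) + H(Y) - H(X,Y)`. -/
noncomputable def mi {Ω α β : Type*} [Fintype Ω] [Fintype α] [DecidableEq α]
    [Fintype β] [DecidableEq β] (p : Ω → ℝ) (X : Ω → α) (Y : Ω → β) : ℝ :=
  ent p X + ent p Y - ent p (fun ω => (X ω, Y ω))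

/-- Conditional mutual information `I(X;Y|W) = H(X,W) + H(Y,W) - H(X,Y,W) - H(W)`. -/
noncomputable def cmi {Ω α β γ : Type*} [Fintype Ω] [Fintype α] [DecidableEq α]
    [Fintype β] [DecidableEq β] [Fintype γ] [DecidableEq γ]
    (p : Ω → ℝ) (X : Ω → α) (Y : Ω → β) (W : Ω → γ) : ℝ :=
  ent p (fun ω => (X ω, W ω)) + ent p (fun ω => (Y ω, W ω))
    - ent p (fun ω => (X ω, Y ω, W ω)) - ent p W

/-- Conditional entropy `H(X|Y) = H(X,Y) - H(Y)`. -/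
noncomputable def condEnt {Ω α β : Type*} [Fintype Ω] [Fintype α] [DecidableEq α]
    [Fintype β] [DecidableEq β] (p : Ω → ℝ) (X : Ω → α) (Y : Ω → β) : ℝ :=
  ent p (fun ω => (X ω, Y ω)) - ent p Y

/-!
Adding the two hypotheses gives `H(X₁,X₂) + H(X₁,X₃) ≤ H(X₁) + H(X₁,X₂,X₃)`, i.e.
`I(X₂;X₃|X₁) ≤ 0`. Conditional mutual information is nonnegative (Gibbs' inequality against the
distribution `p(x,w) p(y,w) / p(w)`, under which `X` and `Y` are independent given `W`), so it
vanishes; hence both hypotheses hold with equality, and their difference is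
`I(X₁;X₂) = I(X₁;X₃)`.
-/

open Real

theorem sum_mul_log_div_le {ι : Type*} [Fintype ι] (q r : ι → ℝ) (hq : ∀ i, 0 ≤ q i)
    (hr : ∀ i, 0 ≤ r i) (hqr : ∀ i, 0 < q i → 0 < r i) :
    ∑ i, q i * log (r i / q i) ≤ ∑ i, r i - ∑ i, q i := by
  rw [← sum_sub_distrib]
  refine sum_le_sum fun i _ => ?_
  rcases (hq i).eq_or_lt with h | h
  · simp [← h, hr i]
  · calc q i * log (r i / q i) ≤ q i * (r i / q i - 1) :=
          mul_le_mul_of_nonneg_left (log_le_sub_one_of_pos (div_pos (hqr i h) h)) h.le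
      _ = r i - q i := by field_simp

section Entropy

variable {Ω α β : Type*} [Fintype Ω] [DecidableEq α] [DecidableEq β] (p : Ω → ℝ)

theorem prb_nonneg (hp0 : ∀ ω, 0 ≤ p ω) (X : Ω → α) (a : α) : 0 ≤ prb p X a :=
  sum_nonneg fun ω _ => hp0 ω

theorem le_prb_apply_self (hp0 : ∀ ω, 0 ≤ p ω) (X : Ω → α) (ω : Ω) : p ω ≤ prb p X (X ω) :=
  single_le_sum (fun ω' _ => hp0 ω') (mem_filter.2 ⟨mem_univ ω, rfl⟩)

theorem prb_le_prb_of_imp (hp0 : ∀ ω, 0 ≤ p ω) {X : Ω → α} {Y : Ω → β} {a : α} {b : β}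
    (h : ∀ ω, X ω = a → Y ω = b) : prb p X a ≤ prb p Y b :=
  sum_le_sum_of_subset_of_nonneg (monotone_filter_right _ fun ω _ => h ω) fun ω _ _ => hp0 ω

theorem prb_apply_self_congr {X : Ω → α} {Y : Ω → β}
    (h : ∀ ω ω', X ω = X ω' ↔ Y ω = Y ω') (ω : Ω) : prb p X (X ω) = prb p Y (Y ω) := by
  simp only [prb, h]

variable [Fintype α]

theorem sum_prb_mul (X : Ω → α) (g : α → ℝ) :
    ∑ a, prb p X a * g a = ∑ ω, p ω * g (X ω) := by
  simp only [prb, sum_mul]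
  rw [← sum_fiberwise univ X fun ω => p ω * g (X ω)]
  refine sum_congr rfl fun a _ => sum_congr rfl fun ω hω => ?_
  rw [(mem_filter.1 hω).2]

theorem sum_prb (hp1 : ∑ ω, p ω = 1) (X : Ω → α) : ∑ a, prb p X a = 1 :=
  (sum_fiberwise univ X p).trans hp1

theorem sum_prb_pair_left (X : Ω → α) (Y : Ω → β) (b : β) :
    ∑ a, prb p (fun ω => (X ω, Y ω)) (a, b) = prb p Y b := by
  rw [prb, ← sum_fiberwise _ X p]
  simp only [prb, filter_filter, Prod.mk.injEq, and_comm]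

theorem ent_eq_neg_sum_mul_log (X : Ω → α) :
    ent p X = -∑ ω, p ω * log (prb p X (X ω)) := by
  rw [← sum_prb_mul p X fun a => log (prb p X a)]
  simp only [ent, negMulLog, neg_mul, sum_neg_distrib]

variable [Fintype β]

theorem ent_congr {X : Ω → α} {Y : Ω → β} (h : ∀ ω ω', X ω = X ω' ↔ Y ω = Y ω') :
    ent p X = ent p Y := by
  simp only [ent_eq_neg_sum_mul_log, prb_apply_self_congr p h]

variable {γ : Type*} [Fintype γ] [DecidableEq γ]

theorem cmi_nonneg (hp0 : ∀ ω, 0 ≤ p ω) (hp1 : ∑ ω, p ω = 1)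
    (X : Ω → α) (Y : Ω → β) (W : Ω → γ) : 0 ≤ cmi p X Y W := by
  set Z := fun ω => (X ω, Y ω, W ω)
  set q := prb p Z
  set u := prb p (fun ω => (X ω, W ω))
  set v := prb p (fun ω => (Y ω, W ω))
  set t := prb p W
  set r : α × β × γ → ℝ := fun x => u (x.1, x.2.2) * v (x.2.1, x.2.2) / t x.2.2
  have hcmi : cmi p X Y W = -∑ x, q x * log (r x / q x) := by
    have hsplit : ∀ ω, p ω * log (r (Z ω) / q (Z ω)) = p ω * log (u (X ω, W ω))
        + p ω * log (v (Y ω, W ω)) - p ω * log (t (W ω)) - p ω * log (q (Z ω)) := by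
      intro ω
      rcases (hp0 ω).eq_or_lt with h | h
      · simp [← h]
      have hq := h.trans_le (le_prb_apply_self p hp0 Z ω)
      have hu := h.trans_le (le_prb_apply_self p hp0 (fun ω => (X ω, W ω)) ω)
      have hv := h.trans_le (le_prb_apply_self p hp0 (fun ω => (Y ω, W ω)) ω)
      have ht := h.trans_le (le_prb_apply_self p hp0 W ω)
      simp only [r]
      rw [log_div (by positivity) hq.ne', log_div (by positivity) ht.ne', log_mul hu.ne' hv.ne']
      ring
    rw [sum_prb_mul p Z fun x => log (r x / q x)]
    simp only [hsplit, sum_add_distrib, sum_sub_distrib, cmi, ent_eq_neg_sum_mul_log]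
    ring
  have hr_sum : ∑ x, r x = 1 := by
    calc ∑ x, r x = ∑ c, (∑ a, u (a, c)) * (∑ b, v (b, c)) / t c := by
          simp only [r, sum_mul_sum, sum_div, Fintype.sum_prod_type]
          exact (sum_congr rfl fun _ _ => sum_comm).trans sum_comm
      -- `mul_self_div_self` also covers `t c = 0`, as `0 / 0 = 0`
      _ = ∑ c, t c := by simp only [u, v, t, sum_prb_pair_left, mul_self_div_self]
      _ = 1 := sum_prb p hp1 W
  have hqr : ∀ x, 0 < q x → 0 < r x := by
    rintro ⟨a, b, c⟩ hx
    have hu : q (a, b, c) ≤ u (a, c) := prb_le_prb_of_imp p hp0 fun ω h => by simp_all [Z]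
    have hv : q (a, b, c) ≤ v (b, c) := prb_le_prb_of_imp p hp0 fun ω h => by simp_all [Z]
    have ht : q (a, b, c) ≤ t c := prb_le_prb_of_imp p hp0 fun ω h => by simp_all [Z]
    exact div_pos (mul_pos (hx.trans_le hu) (hx.trans_le hv)) (hx.trans_le ht)
  have gibbs := sum_mul_log_div_le q r (prb_nonneg p hp0 Z)
    (fun _ => div_nonneg (mul_nonneg (prb_nonneg p hp0 _ _) (prb_nonneg p hp0 _ _))
      (prb_nonneg p hp0 _ _)) hqr
  linarith [sum_prb p hp1 Z]

end Entropy

/-- If `Δ(S) ≥ I(X_{1,2};X_3)` and `Δ(S) ≥ I(X_{1,3};X_2)`, then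
`I(X_1;X_2) = I(X_1;X_3)` and `I(X_2;X_3|X_1) = 0`. -/
theorem case1_equalities {Ω α β γ : Type*} [Fintype Ω] [Fintype α] [DecidableEq α]
    [Fintype β] [DecidableEq β] [Fintype γ] [DecidableEq γ]
    (p : Ω → ℝ) (hp0 : ∀ ω, 0 ≤ p ω) (hp1 : ∑ ω : Ω, p ω = 1)
    (X1 : Ω → α) (X2 : Ω → β) (X3 : Ω → γ)
    (h1 : mi p (fun ω => (X1 ω, X2 ω)) X3
      ≤ (1/2) * (ent p X1 + ent p X2 + ent p X3 - ent p (fun ω => (X1 ω, X2 ω, X3 ω))))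
    (h2 : mi p (fun ω => (X1 ω, X3 ω)) X2
      ≤ (1/2) * (ent p X1 + ent p X2 + ent p X3 - ent p (fun ω => (X1 ω, X2 ω, X3 ω)))) :
    mi p X1 X2 = mi p X1 X3 ∧ cmi p X2 X3 X1 = 0 := by
  have regroup₁ : ent p (fun ω => ((X1 ω, X2 ω), X3 ω)) = ent p (fun ω => (X1 ω, X2 ω, X3 ω)) :=
    ent_congr p fun _ _ => by simp only [Prod.mk.injEq]; tauto
  have regroup₂ : ent p (fun ω => ((X1 ω, X3 ω), X2 ω)) = ent p (fun ω => (X1 ω, X2 ω, X3 ω)) :=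
    ent_congr p fun _ _ => by simp only [Prod.mk.injEq]; tauto
  have regroup₃ : ent p (fun ω => (X2 ω, X3 ω, X1 ω)) = ent p (fun ω => (X1 ω, X2 ω, X3 ω)) :=
    ent_congr p fun _ _ => by simp only [Prod.mk.injEq]; tauto
  have swap₂ : ent p (fun ω => (X2 ω, X1 ω)) = ent p (fun ω => (X1 ω, X2 ω)) :=
    ent_congr p fun _ _ => by simp only [Prod.mk.injEq]; tauto
  have swap₃ : ent p (fun ω => (X3 ω, X1 ω)) = ent p (fun ω => (X1 ω, X3 ω)) :=
    ent_congr p fun _ _ => by simp only [Prod.mk.injEq]; tauto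
  have hcmi := cmi_nonneg p hp0 hp1 X2 X3 X1
  simp only [mi, cmi, regroup₁, regroup₂, regroup₃, swap₂, swap₃] at h1 h2 hcmi ⊢
  constructor <;> linarith
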